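/- For an i.i.d. sequence with continuous CDF F, p = F(u) ∈ (0,1), q = 1 - p, the peak-based cluster size distribution satisfies P(S = 1) = 3p²q/(1 - p³), where S is the cluster size conditional on 0 being a local maximum above u. That is, P(X_{-1} ≤ u, X_1 ≤ u | X_0 > u, X_0 > X_{-1}, X_0 > X_1) = 3p²q/(1 - p³). -/

import Mathlib

/-!
Push the problem forward to the law `ν ⊗ ν ⊗ ν` of `(X (-1), X 0, X 1)`, `ν` the law of `X 0`,
and work more generally with `n` i.i.d. coordinates. By exchangeability the events "coordinate `i` is the strict maximum and
exceeds `u`" are disjoint and equally likely; since `ν` has no atoms, ties are null, so up to a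
null set their union is "some coordinate exceeds `u`", of probability `1 - pⁿ`. Hence each has
probability `(1 - pⁿ) / n`. The event that `i` is such a peak and all other coordinates are
`≤ u` is a box, of probability `pⁿ⁻¹ q`.
-/

open Function MeasureTheory ProbabilityTheory Set
open scoped ENNReal

namespace ProbabilityTheory

lemma IndepFun.measure_eq_eq_zero {Ω : Type*} [MeasurableSpace Ω] {μ : Measure Ω}
    [IsFiniteMeasure μ] {Y Z : Ω → ℝ} (hY : Measurable Y) (hZ : Measurable Z)
    (hYZ : IndepFun Y Z μ) [NullSingletonClass (μ.map Z)] :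
    μ {ω | Y ω = Z ω} = 0 := by
  have hdiag : MeasurableSet {x : ℝ × ℝ | x.1 = x.2} :=
    measurableSet_eq_fun measurable_fst measurable_snd
  have hlaw := (indepFun_iff_map_prod_eq_prod_map_map hY.aemeasurable hZ.aemeasurable).1 hYZ
  calc μ {ω | Y ω = Z ω} = μ.map (fun ω => (Y ω, Z ω)) {x | x.1 = x.2} :=
        (Measure.map_apply (hY.prodMk hZ) hdiag).symm
    _ = ∫⁻ y, μ.map Z {y} ∂μ.map Y := by
        rw [hlaw, Measure.prod_apply hdiag]
        congr! with y
        ext z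
        simp [eq_comm]
    _ = 0 := by simp

theorem iIndepFun.map_eq_pi {Ω ι κ β : Type*} [MeasurableSpace Ω] [MeasurableSpace β]
    {μ : Measure Ω} [IsProbabilityMeasure μ] [Fintype κ] {X : ι → Ω → β}
    (hmeas : ∀ i, Measurable (X i)) (hindep : iIndepFun X μ) {ν : Measure β}
    (hlaw : ∀ i, μ.map (X i) = ν) {e : κ → ι} (he : e.Injective) :
    μ.map (fun ω k => X (e k) ω) = Measure.pi fun _ => ν := by
  rw [(iIndepFun_iff_map_fun_eq_pi_map fun k => (hmeas (e k)).aemeasurable).1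
    (hindep.precomp he)]
  simp only [hlaw]

lemma cond_preimage_eq_cond_map {Ω α : Type*} [MeasurableSpace Ω] [MeasurableSpace α]
    (μ : Measure Ω) {Y : Ω → α} (hY : Measurable Y) {s t : Set α} (hs : MeasurableSet s)
    (ht : MeasurableSet t) :
    μ[Y ⁻¹' t | Y ⁻¹' s] = (μ.map Y)[t | s] := by
  rw [cond_apply (hY hs), cond_apply hs, Measure.map_apply hY hs,
    Measure.map_apply hY (hs.inter ht), preimage_inter]

end ProbabilityTheory

section Peak

variable {ι : Type*}

def peakSet (u : ℝ) (i : ι) : Set (ι → ℝ) := {x | u < x i ∧ ∀ j ≠ i, x j < x i}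

lemma measurableSet_peakSet [Countable ι] (u : ℝ) (i : ι) : MeasurableSet (peakSet u i) := by
  simp only [peakSet, ofPred_and, ofPred_forall]
  exact (measurableSet_lt measurable_const (measurable_pi_apply i)).inter
    (.iInter fun j => .iInter fun _ =>
      measurableSet_lt (measurable_pi_apply j) (measurable_pi_apply i))

lemma pairwise_disjoint_peakSet (u : ℝ) :
    Pairwise (Disjoint on peakSet (ι := ι) u) :=
  fun i j hij => disjoint_left.2 fun _ hi hj => (hi.2 j hij.symm).not_gt (hj.2 i hij)

lemma preimage_comp_peakSet (u : ℝ) (σ : Equiv.Perm ι) (i : ι) :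
    (fun x : ι → ℝ => x ∘ σ) ⁻¹' peakSet u i = peakSet u (σ i) := by
  ext x
  simp only [peakSet, mem_preimage, mem_ofPred_eq, comp_apply]
  refine and_congr_right fun _ => σ.forall_congr fun {j} => ?_
  simp

lemma measurePreserving_comp_perm [Fintype ι] (ν : Measure ℝ) [SigmaFinite ν]
    (σ : Equiv.Perm ι) :
    MeasurePreserving (fun x : ι → ℝ => x ∘ σ)
      (Measure.pi fun _ => ν) (Measure.pi fun _ => ν) := by
  convert measurePreserving_piCongrLeft (fun _ : ι => ν) σ.symm using 1
  ext x i
  rw [MeasurableEquiv.coe_piCongrLeft, Equiv.piCongrLeft_apply_eq_cast]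
  simp

lemma setOf_exists_lt_subset_iUnion_peakSet_union [Finite ι] (u : ℝ) :
    {x : ι → ℝ | ∃ i, u < x i} ⊆
      (⋃ i, peakSet u i) ∪ ⋃ i, ⋃ j, ⋃ (_ : i ≠ j), {x | x i = x j} := by
  rintro x ⟨k, hk⟩
  have : Nonempty ι := ⟨k⟩
  obtain ⟨i, hi⟩ := Finite.exists_max x
  by_cases hpeak : ∀ j ≠ i, x j < x i
  · exact Or.inl (mem_iUnion.2 ⟨i, hk.trans_le (hi k), hpeak⟩)
  · push Not at hpeak
    obtain ⟨j, hji, hle⟩ := hpeak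
    exact Or.inr (mem_iUnion₂.2 ⟨j, i, mem_iUnion.2 ⟨hji, (hi j).antisymm hle⟩⟩)

lemma peakSet_inter_setOf_forall_le [DecidableEq ι] (u : ℝ) (i : ι) :
    peakSet u i ∩ {x | ∀ j ≠ i, x j ≤ u} =
      univ.pi (update (fun _ => Iic u) i (Ioi u)) := by
  ext x
  have hcoord (j : ι) : x j ∈ update (fun _ => Iic u) i (Ioi u) j ↔
      (j = i → u < x j) ∧ (j ≠ i → x j ≤ u) := by
    by_cases hj : j = i
    · subst hj; simp
    · simp [hj]
  simp only [peakSet, mem_inter_iff, mem_ofPred_eq, mem_univ_pi, hcoord, forall_and,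
    forall_eq]
  exact ⟨fun ⟨⟨hi, _⟩, hle⟩ => ⟨hi, hle⟩,
    fun ⟨hi, hle⟩ => ⟨⟨hi, fun j hj => (hle j hj).trans_lt hi⟩, hle⟩⟩

section Pi

variable [Fintype ι] (ν : Measure ℝ) [IsProbabilityMeasure ν]

lemma measure_pi_setOf_apply_eq_apply [NullSingletonClass ν] {i j : ι} (hij : i ≠ j) :
    Measure.pi (fun _ => ν) {x : ι → ℝ | x i = x j} = 0 := by
  have hindep : iIndepFun (fun i (x : ι → ℝ) => x i) (Measure.pi fun _ => ν) :=
    iIndepFun_pi (X := fun _ => id) fun _ => aemeasurable_id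
  have : NullSingletonClass ((Measure.pi fun _ : ι => ν).map fun x => x j) := by
    rw [(measurePreserving_eval _ j).map_eq]; infer_instance
  exact IndepFun.measure_eq_eq_zero (measurable_pi_apply i) (measurable_pi_apply j)
    (hindep.indepFun hij)

lemma measure_pi_setOf_exists_lt (u : ℝ) :
    Measure.pi (fun _ => ν) {x : ι → ℝ | ∃ i, u < x i} =
      1 - ν (Iic u) ^ Fintype.card ι := by
  have : {x : ι → ℝ | ∃ i, u < x i} = (univ.pi fun _ => Iic u)ᶜ := by
    ext x; simp [Pi.le_def]
  rw [this, measure_compl (.univ_pi fun _ => measurableSet_Iic) (measure_ne_top _ _),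
    measure_univ, Measure.pi_pi, Finset.prod_const, Finset.card_univ]

lemma measure_pi_iUnion_peakSet [NullSingletonClass ν] (u : ℝ) :
    Measure.pi (fun _ => ν) (⋃ i : ι, peakSet u i) = 1 - ν (Iic u) ^ Fintype.card ι := by
  rw [← measure_pi_setOf_exists_lt (ι := ι) ν]
  refine le_antisymm (measure_mono (iUnion_subset fun i _ hx => ⟨i, hx.1⟩)) ?_
  have hties :
      Measure.pi (fun _ => ν) (⋃ i : ι, ⋃ j, ⋃ (_ : i ≠ j), {x | x i = x j}) = 0 :=
    measure_iUnion_null fun i => measure_iUnion_null fun j => measure_iUnion_null fun hij =>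
      measure_pi_setOf_apply_eq_apply ν hij
  calc _ ≤ _ := measure_mono (setOf_exists_lt_subset_iUnion_peakSet_union u)
    _ ≤ _ := measure_union_le _ _
    _ = _ := by rw [hties, add_zero]

lemma card_mul_measure_pi_peakSet [NullSingletonClass ν] (u : ℝ) (i : ι) :
    Fintype.card ι * Measure.pi (fun _ => ν) (peakSet u i) =
      1 - ν (Iic u) ^ Fintype.card ι := by
  classical
  have hexch (j : ι) : Measure.pi (fun _ => ν) (peakSet u j) =
      Measure.pi (fun _ => ν) (peakSet u i) := by
    rw [← Equiv.swap_apply_left i j, ← preimage_comp_peakSet,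
      (measurePreserving_comp_perm ν _).measure_preimage
        (measurableSet_peakSet u i).nullMeasurableSet]
  rw [← measure_pi_iUnion_peakSet ν, measure_iUnion (pairwise_disjoint_peakSet u)
    (measurableSet_peakSet u), tsum_fintype, Finset.sum_congr rfl fun j _ => hexch j,
    Finset.sum_const, nsmul_eq_mul, Finset.card_univ]

lemma measure_pi_peakSet_inter_setOf_forall_le (u : ℝ) (i : ι) :
    Measure.pi (fun _ => ν) (peakSet u i ∩ {x | ∀ j ≠ i, x j ≤ u}) =
      ν (Iic u) ^ (Fintype.card ι - 1) * ν (Ioi u) := by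
  classical
  rw [peakSet_inter_setOf_forall_le, Measure.pi_pi]
  simp only [apply_update (fun _ => ν)]
  rw [Finset.prod_update_of_mem (Finset.mem_univ i), Finset.prod_const, Finset.card_univ_sdiff,
    Finset.card_singleton, mul_comm]

theorem cond_pi_setOf_forall_le_peakSet [NullSingletonClass ν] (u : ℝ) (i : ι) :
    (Measure.pi fun _ => ν)[{x | ∀ j ≠ i, x j ≤ u} | peakSet u i] =
      Fintype.card ι * ν (Iic u) ^ (Fintype.card ι - 1) * ν (Ioi u) /
        (1 - ν (Iic u) ^ Fintype.card ι) := by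
  have : Nonempty ι := ⟨i⟩
  have hn : (Fintype.card ι : ℝ≥0∞) ≠ 0 := by simp
  rw [cond_apply (measurableSet_peakSet u i), measure_pi_peakSet_inter_setOf_forall_le,
    ← card_mul_measure_pi_peakSet ν u i, mul_assoc,
    ENNReal.mul_div_mul_left _ _ hn (ENNReal.natCast_ne_top _), div_eq_mul_inv, mul_comm]

end Pi

end Peak

theorem peak_cluster_size_one_general
    {Ω : Type*} [MeasurableSpace Ω] (μ : Measure Ω) [IsProbabilityMeasure μ]
    (X : ℤ → Ω → ℝ) (hmeas : ∀ t, Measurable (X t))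
    (hindep : iIndepFun X μ)
    (hident : ∀ t : ℤ, IdentDistrib (X t) (X 0) μ μ)
    (hcont : ∀ x : ℝ, μ {ω | X 0 ω = x} = 0)
    (u : ℝ) (p q : ℝ≥0∞)
    (hp : μ {ω | X 0 ω ≤ u} = p) (hq : q = 1 - p) :
    μ[{ω | X (-1) ω ≤ u ∧ X 1 ω ≤ u}
      | {ω | u < X 0 ω ∧ X (-1) ω < X 0 ω ∧ X 1 ω < X 0 ω}]
      = 3 * p ^ 2 * q / (1 - p ^ 3) := by
  set ν := μ.map (X 0)
  have : IsProbabilityMeasure ν := Measure.isProbabilityMeasure_map (hmeas 0).aemeasurable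
  have : NullSingletonClass ν :=
    ⟨fun x => by rw [Measure.map_apply (hmeas 0) (measurableSet_singleton x)]; exact hcont x⟩
  have hIic : ν (Iic u) = p := by rw [Measure.map_apply (hmeas 0) measurableSet_Iic]; exact hp
  have hIoi : ν (Ioi u) = q := by
    rw [← compl_Iic, measure_compl measurableSet_Iic (measure_ne_top _ _), measure_univ, hIic, hq]
  set Y : Ω → Fin 3 → ℝ := fun ω k => X (![-1, 0, 1] k) ω
  have hY : Measurable Y := measurable_pi_lambda _ fun k => hmeas _
  have hYlaw : μ.map Y = Measure.pi fun _ => ν :=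
    hindep.map_eq_pi hmeas (fun t => (hident t).map_eq) (by decide)
  have hA : {ω | X (-1) ω ≤ u ∧ X 1 ω ≤ u} = Y ⁻¹' {x | ∀ j ≠ 1, x j ≤ u} := by
    ext ω; simp [Y, Fin.forall_fin_succ]
  have hB :
      {ω | u < X 0 ω ∧ X (-1) ω < X 0 ω ∧ X 1 ω < X 0 ω} = Y ⁻¹' peakSet u 1 := by
    ext ω; simp [Y, peakSet, Fin.forall_fin_succ]
  rw [hA, hB, cond_preimage_eq_cond_map μ hY (measurableSet_peakSet u 1) (by measurability), hYlaw,
    cond_pi_setOf_forall_le_peakSet, hIic, hIoi]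
  simp

/-- For an i.i.d. sequence with continuous CDF, `p = P(X 0 ≤ u) ∈ (0,1)`,
`q = 1 - p`, the peak-based cluster size distribution satisfies
`P(X_{-1} ≤ u, X_1 ≤ u | X_0 > u, X_0 > X_{-1}, X_0 > X_1) = 3p²q/(1 - p³)`. -/
theorem peak_cluster_size_one
    {Ω : Type*} [MeasurableSpace Ω] (μ : Measure Ω) [IsProbabilityMeasure μ]
    (X : ℤ → Ω → ℝ) (hmeas : ∀ t, Measurable (X t))
    (hindep : iIndepFun X μ)
    (hident : ∀ t : ℤ, IdentDistrib (X t) (X 0) μ μ)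
    (hcont : ∀ x : ℝ, μ {ω | X 0 ω = x} = 0)
    (u : ℝ) (p q : ℝ≥0∞)
    (hp : μ {ω | X 0 ω ≤ u} = p) (hp0 : 0 < p) (hp1 : p < 1) (hq : q = 1 - p) :
    μ[{ω | X (-1) ω ≤ u ∧ X 1 ω ≤ u}
      | {ω | u < X 0 ω ∧ X (-1) ω < X 0 ω ∧ X 1 ω < X 0 ω}]
      = 3 * p ^ 2 * q / (1 - p ^ 3) :=
  peak_cluster_size_one_general μ X hmeas hindep hident hcont u p q hp hq
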